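/- arXiv:2605.08683 — 4 statements merged into one kernel-verified Lean document; each statement's English description precedes it below -/
import Mathlib

section
/- If x is majorized by y in R^N, then for every continuous convex function f : R → R, the sum of f(x_n) over n is at most the sum of f(y_n) over n. -/
open Finset

/-- `x` is majorized by `y`: the sum of `x` over any subset is dominated by the sum of `y`
over some subset of the same cardinality (i.e. partial sums of decreasing rearrangements
are dominated), and the total sums agree. -/
def Majorized {N : ℕ} (x y : Fin N → ℝ) : Prop :=
  (∀ s : Finset (Fin N), ∃ t : Finset (Fin N), t.card = s.card ∧ ∑ i ∈ s, x i ≤ ∑ i ∈ t, y i)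
  ∧ ∑ i, x i = ∑ i, y i

/-- Subgradient existence for a convex function on ℝ. -/
lemma exists_subgrad {f : ℝ → ℝ} (hconv : ConvexOn ℝ Set.univ f) (a : ℝ) :
    ∃ c : ℝ, ∀ z : ℝ, f a + c * (z - a) ≤ f z := by
  set S : Set ℝ := (fun z => (f z - f a) / (z - a)) '' Set.Ioi a with hS
  have hne : S.Nonempty := ⟨_, ⟨a + 1, by simp, rfl⟩⟩
  have hbdd : BddBelow S := by
    refine ⟨(f a - f (a - 1)) / (a - (a - 1)), ?_⟩
    rintro _ ⟨z, hz, rfl⟩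
    exact hconv.slope_mono_adjacent (Set.mem_univ _) (Set.mem_univ _) (by linarith)
      (Set.mem_Ioi.mp hz)
  refine ⟨sInf S, fun z => ?_⟩
  rcases lt_trichotomy z a with h | h | h
  · have hub : sInf S ≤ (f a - f z) / (a - z) → False → True := fun _ _ => trivial
    have hle : (f a - f z) / (a - z) ≤ sInf S := by
      refine le_csInf hne ?_
      rintro _ ⟨w, hw, rfl⟩
      exact hconv.slope_mono_adjacent (Set.mem_univ _) (Set.mem_univ _) h (Set.mem_Ioi.mp hw)
    rw [div_le_iff₀ (by linarith)] at hle
    nlinarith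
  · simp [h]
  · have hle : sInf S ≤ (f z - f a) / (z - a) := csInf_le hbdd ⟨z, Set.mem_Ioi.mpr h, rfl⟩
    rw [le_div_iff₀ (by linarith)] at hle
    linarith

/-- Abel-summation step: sorted HLP inequality on ℕ-indexed sequences. -/
lemma abel_key (N : ℕ) (A B : ℕ → ℝ) (f φ : ℝ → ℝ)
    (hφ : ∀ p q : ℝ, f p + φ p * (q - p) ≤ f q)
    (hφm : Monotone φ)
    (hA : ∀ i j : ℕ, i ≤ j → j < N → A j ≤ A i)
    (hPQ : ∀ k ≤ N, ∑ i ∈ range k, A i ≤ ∑ i ∈ range k, B i)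
    (hEq : ∑ i ∈ range N, A i = ∑ i ∈ range N, B i) :
    ∑ i ∈ range N, f (A i) ≤ ∑ i ∈ range N, f (B i) := by
  set C : ℕ → ℝ := fun i => φ (A i) with hC
  set g : ℕ → ℝ := fun i => B i - A i with hg
  have habel := Finset.sum_range_by_parts C g N
  have hGN : ∑ i ∈ range N, g i = 0 := by
    simp only [hg, Finset.sum_sub_distrib]
    linarith
  have hterm : ∀ i ∈ range (N - 1), (C (i + 1) - C i) • (∑ j ∈ range (i + 1), g j) ≤ 0 := by
    intro i hi
    rw [Finset.mem_range] at hi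
    have hiN : i + 1 < N := by omega
    have h1 : C (i + 1) ≤ C i := hφm (hA i (i + 1) (by omega) hiN)
    have h2 : (0:ℝ) ≤ ∑ j ∈ range (i + 1), g j := by
      have := hPQ (i + 1) (by omega)
      simp only [hg, Finset.sum_sub_distrib]
      linarith
    have : (C (i + 1) - C i) ≤ 0 := by linarith
    exact mul_nonpos_of_nonpos_of_nonneg this h2
  have hCg : (0:ℝ) ≤ ∑ i ∈ range N, C i • g i := by
    rw [habel, hGN, smul_zero, zero_sub]
    have : ∑ i ∈ range (N - 1), (C (i + 1) - C i) • (∑ j ∈ range (i + 1), g j) ≤ 0 :=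
      Finset.sum_nonpos hterm
    linarith
  have hstep : ∑ i ∈ range N, (f (A i) + C i • g i) ≤ ∑ i ∈ range N, f (B i) := by
    refine Finset.sum_le_sum fun i _ => ?_
    have := hφ (A i) (B i)
    simp only [hC, hg, smul_eq_mul]
    linarith
  rw [Finset.sum_add_distrib] at hstep
  linarith

/-- A strictly monotone map `Fin k → Fin N` satisfies `j ≤ f j`. -/
lemma le_of_strictMono_fin {k N : ℕ} (f : Fin k → Fin N) (hf : StrictMono f) (j : Fin k) :
    (j : ℕ) ≤ (f j : ℕ) := by
  obtain ⟨n, hn⟩ := j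
  induction n with
  | zero => simp
  | succ m ih =>
    have hm : m < k := by omega
    have h1 : m ≤ (f ⟨m, hm⟩ : ℕ) := by simpa using ih hm
    have h2 : (f ⟨m, hm⟩ : ℕ) < (f ⟨m + 1, hn⟩ : ℕ) := hf (by simp [Fin.lt_def])
    show m + 1 ≤ _
    omega

lemma filter_lt_eq_attachFin {N k : ℕ} (hk : k ≤ N) :
    (univ.filter fun i : Fin N => (i : ℕ) < k) =
      (Finset.range k).attachFin (fun m hm => lt_of_lt_of_le (Finset.mem_range.mp hm) hk) := by
  ext i
  simp [Finset.mem_attachFin]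

lemma card_filter_lt {N k : ℕ} (hk : k ≤ N) :
    (univ.filter fun i : Fin N => (i : ℕ) < k).card = k := by
  rw [filter_lt_eq_attachFin hk, Finset.card_attachFin, Finset.card_range]

lemma sum_filter_lt {N k : ℕ} (hk : k ≤ N) (g : Fin N → ℝ) :
    ∑ i ∈ univ.filter (fun i : Fin N => (i : ℕ) < k), g i
      = ∑ j : Fin k, g (Fin.castLE hk j) := by
  have himg : univ.filter (fun i : Fin N => (i : ℕ) < k)
      = Finset.image (Fin.castLE hk) univ := by
    ext i
    simp only [Finset.mem_filter, Finset.mem_univ, true_and, Finset.mem_image]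
    constructor
    · intro hi
      exact ⟨⟨(i : ℕ), hi⟩, by ext; simp⟩
    · rintro ⟨j, rfl⟩
      simpa using j.2
    
  rw [himg, Finset.sum_image (fun a _ b _ h => Fin.castLE_injective hk h)]

/-- For an antitone `g`, the sum over any finset is at most the sum over the initial
segment of the same cardinality. -/
lemma antitone_sum_le {N : ℕ} (g : Fin N → ℝ) (hg : ∀ i j : Fin N, i ≤ j → g j ≤ g i)
    (s : Finset (Fin N)) :
    ∑ i ∈ s, g i ≤ ∑ i ∈ univ.filter (fun i : Fin N => (i : ℕ) < s.card), g i := by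
  have hk : s.card ≤ N := by
    simpa using Finset.card_le_univ s
  set k := s.card with hkdef
  have e := s.orderEmbOfFin (rfl : s.card = k)
  have himg : s = Finset.image (s.orderEmbOfFin rfl) univ := by
    ext i
    simp only [Finset.mem_image, Finset.mem_univ, true_and]
    constructor
    · intro hi
      have : i ∈ Set.range (s.orderEmbOfFin (rfl : s.card = k)) := by
        rw [Finset.range_orderEmbOfFin]; exact hi
      obtain ⟨j, hj⟩ := this
      exact ⟨j, hj⟩
    · rintro ⟨j, rfl⟩
      exact Finset.orderEmbOfFin_mem s rfl j
  rw [sum_filter_lt hk, himg, Finset.sum_image (fun a _ b _ h =>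
    (s.orderEmbOfFin rfl).injective h)]
  refine Finset.sum_le_sum fun j _ => ?_
  refine hg _ _ ?_
  rw [Fin.le_def]
  simpa using le_of_strictMono_fin _ (s.orderEmbOfFin rfl).strictMono j

/-- if `x ≺ y` then `∑ f (x n) ≤ ∑ f (y n)` for every continuous convex `f`. -/
theorem majorized_sum_convex_le {N : ℕ} (x y : Fin N → ℝ)
    (hmaj : Majorized x y) (f : ℝ → ℝ)
    (hcont : Continuous f) (hconv : ConvexOn ℝ Set.univ f) :
    ∑ n, f (x n) ≤ ∑ n, f (y n) := by
  classical
  -- subgradient choice function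
  choose φ hφ using fun a => exists_subgrad hconv a
  have hφm : Monotone φ := by
    intro p q hpq
    rcases eq_or_lt_of_le hpq with rfl | h
    · exact le_rfl
    · have h1 := hφ p q
      have h2 := hφ q p
      have hmul : φ p * (q - p) ≤ φ q * (q - p) := by nlinarith
      exact le_of_mul_le_mul_right hmul (sub_pos.mpr h)
  -- sorted (decreasing) rearrangements
  set σx := Tuple.sort x with hσx
  set σy := Tuple.sort y with hσy
  have hmx : Monotone (x ∘ σx) := Tuple.monotone_sort x
  have hmy : Monotone (y ∘ σy) := Tuple.monotone_sort y
  set a : Fin N → ℝ := fun i => x (σx i.rev) with hadef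
  set b : Fin N → ℝ := fun i => y (σy i.rev) with hbdef
  have ha : ∀ i j : Fin N, i ≤ j → a j ≤ a i := fun i j h =>
    hmx (Fin.rev_le_rev.mpr h)
  have hb : ∀ i j : Fin N, i ≤ j → b j ≤ b i := fun i j h =>
    hmy (Fin.rev_le_rev.mpr h)
  set A : ℕ → ℝ := fun n => if h : n < N then a ⟨n, h⟩ else 0 with hAdef
  set B : ℕ → ℝ := fun n => if h : n < N then b ⟨n, h⟩ else 0 with hBdef
  -- sums over initial segments
  have hsumA : ∀ k (hk : k ≤ N), ∑ i ∈ Finset.range k, A i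
      = ∑ j : Fin k, a (Fin.castLE hk j) := by
    intro k hk
    rw [← Fin.sum_univ_eq_sum_range]
    refine Finset.sum_congr rfl fun j _ => ?_
    have hj : (j : ℕ) < N := lt_of_lt_of_le j.2 hk
    simp [hAdef, hj, Fin.castLE]
  have hsumB : ∀ k (hk : k ≤ N), ∑ i ∈ Finset.range k, B i
      = ∑ j : Fin k, b (Fin.castLE hk j) := by
    intro k hk
    rw [← Fin.sum_univ_eq_sum_range]
    refine Finset.sum_congr rfl fun j _ => ?_
    have hj : (j : ℕ) < N := lt_of_lt_of_le j.2 hk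
    simp [hBdef, hj, Fin.castLE]
  -- full sums
  have hax : ∑ i : Fin N, a i = ∑ i, x i := by
    rw [hadef]
    exact Equiv.sum_comp (Fin.revPerm.trans σx) x
  have hby : ∑ i : Fin N, b i = ∑ i, y i := by
    rw [hbdef]
    exact Equiv.sum_comp (Fin.revPerm.trans σy) y
  have hAN : ∑ i ∈ Finset.range N, A i = ∑ i, x i := by
    rw [hsumA N le_rfl, ← hax]
    refine Finset.sum_congr rfl fun j _ => by simp [Fin.castLE]
  have hBN : ∑ i ∈ Finset.range N, B i = ∑ i, y i := by
    rw [hsumB N le_rfl, ← hby]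
    refine Finset.sum_congr rfl fun j _ => by simp [Fin.castLE]
  -- partial sum domination
  have hPQ : ∀ k ≤ N, ∑ i ∈ Finset.range k, A i ≤ ∑ i ∈ Finset.range k, B i := by
    intro k hk
    set m : Fin k → Fin N := fun j => σx (Fin.rev (Fin.castLE hk j)) with hm
    have hminj : Function.Injective m := by
      intro p q h
      have := σx.injective h
      have := Fin.rev_injective this
      exact Fin.castLE_injective hk this
    set sk : Finset (Fin N) := Finset.image m univ with hsk
    have hskcard : sk.card = k := by
      rw [hsk, Finset.card_image_of_injective _ hminj, Finset.card_univ, Fintype.card_fin]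
    have hsksum : ∑ i ∈ sk, x i = ∑ i ∈ Finset.range k, A i := by
      rw [hsk, Finset.sum_image (fun p _ q _ h => hminj h), hsumA k hk]
    obtain ⟨t, htc, hle⟩ := hmaj.1 sk
    -- transfer t to sorted coordinates
    set m' : Fin N → Fin N := fun j => (σy.symm j).rev with hm'
    have hm'inj : Function.Injective m' := fun p q h =>
      σy.symm.injective (Fin.rev_injective h)
    set t' : Finset (Fin N) := Finset.image m' t with ht'
    have ht'card : t'.card = k := by
      rw [ht', Finset.card_image_of_injective _ hm'inj, htc, hskcard]
    have hty : ∑ i ∈ t', b i = ∑ i ∈ t, y i := by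
      rw [ht', Finset.sum_image (fun p _ q _ h => hm'inj h)]
      refine Finset.sum_congr rfl fun j _ => ?_
      simp [hbdef, hm', Fin.rev_rev]
    have hfinal : ∑ i ∈ t', b i ≤ ∑ i ∈ Finset.range k, B i := by
      have h1 := antitone_sum_le b hb t'
      rw [ht'card] at h1
      rw [hsumB k hk, ← sum_filter_lt hk]
      exact h1
    calc ∑ i ∈ Finset.range k, A i = ∑ i ∈ sk, x i := hsksum.symm
      _ ≤ ∑ i ∈ t, y i := hle
      _ = ∑ i ∈ t', b i := hty.symm
      _ ≤ ∑ i ∈ Finset.range k, B i := hfinal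
  -- apply the Abel key lemma
  have hA' : ∀ i j : ℕ, i ≤ j → j < N → A j ≤ A i := by
    intro i j hij hj
    have hi : i < N := lt_of_le_of_lt hij hj
    simp only [hAdef, dif_pos hi, dif_pos hj]
    exact ha ⟨i, hi⟩ ⟨j, hj⟩ hij
  have hEq : ∑ i ∈ Finset.range N, A i = ∑ i ∈ Finset.range N, B i := by
    rw [hAN, hBN]; exact hmaj.2
  have hkey := abel_key N A B f φ (fun p q => hφ p q) hφm hA' hPQ hEq
  -- convert back
  have hLHS : ∑ i ∈ Finset.range N, f (A i) = ∑ n, f (x n) := by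
    rw [← Fin.sum_univ_eq_sum_range (fun i => f (A i)) N]
    have : ∑ i : Fin N, f (A i) = ∑ i : Fin N, f (a i) := by
      refine Finset.sum_congr rfl fun j _ => by simp [hAdef, j.2]
    rw [this, hadef]
    exact Equiv.sum_comp (Fin.revPerm.trans σx) (fun i => f (x i))
  have hRHS : ∑ i ∈ Finset.range N, f (B i) = ∑ n, f (y n) := by
    rw [← Fin.sum_univ_eq_sum_range (fun i => f (B i)) N]
    have : ∑ i : Fin N, f (B i) = ∑ i : Fin N, f (b i) := by
      refine Finset.sum_congr rfl fun j _ => by simp [hBdef, j.2]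
    rw [this, hbdef]
    exact Equiv.sum_comp (Fin.revPerm.trans σy) (fun i => f (y i))
  rw [← hLHS, ← hRHS]
  exact hkey
end

section
/- Let c_1, ..., c_K be the diagonal entries of U* C V̄ for unitary U, V, and let σ_1 ≥ ... ≥ σ_K be the singular values of C. If w_1 ≥ ... ≥ w_K ≥ 0, and τ is a permutation sorting |c_{τ(n)}| in decreasing order, then ∑_{n=1}^K w_n Re(c_n) ≤ ∑_{n=1}^K w_n |c_{τ(n)}| ≤ ∑_{n=1}^K w_n σ_n. -/
open Finset Matrix

lemma abel_aux (K : ℕ) (w d : ℕ → ℝ) (hwa : Antitone w) (hw0 : ∀ n, 0 ≤ w n)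
    (h : ∀ k ≤ K, 0 ≤ ∑ n ∈ range k, d n) : 0 ≤ ∑ n ∈ range K, w n * d n := by
  induction K generalizing w with
  | zero => simp
  | succ K ih =>
    have e1 : ∑ n ∈ range (K+1), w n * d n
        = ∑ n ∈ range (K+1), ((w (min n K) - w K) * d n + w K * d n) := by
      refine Finset.sum_congr rfl fun n hn => ?_
      have : min n K = n := min_eq_left (Nat.lt_succ_iff.1 (mem_range.1 hn))
      rw [this]; ring
    rw [e1, Finset.sum_add_distrib, ← Finset.mul_sum]
    have h2 : 0 ≤ w K * ∑ n ∈ range (K+1), d n :=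
      mul_nonneg (hw0 K) (h (K+1) le_rfl)
    have h3 : 0 ≤ ∑ n ∈ range (K+1), (w (min n K) - w K) * d n := by
      rw [Finset.sum_range_succ]
      simp only [min_self, sub_self, zero_mul, add_zero]
      exact ih (fun n => w (min n K) - w K)
        (fun a b hab => sub_le_sub_right (hwa (min_le_min_right K hab)) _)
        (fun n => sub_nonneg.2 (hwa (min_le_right n K)))
        (fun k hk => h k (hk.trans (Nat.le_succ K)))
    linarith

lemma sv_bound_aux (K k : ℕ) (σ : ℕ → ℝ) (hσa : Antitone σ) (hσ0 : ∀ n, 0 ≤ σ n)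
    (p : ℕ → ℝ) (hp0 : ∀ n, 0 ≤ p n) (hp1 : ∀ n, p n ≤ 1) (hk : k ≤ K)
    (hs : ∑ n ∈ range K, p n ≤ k) :
    ∑ n ∈ range K, σ n * p n ≤ ∑ n ∈ range k, σ n := by
  have hsplit : ∑ n ∈ range k, σ n * p n + ∑ n ∈ Ico k K, σ n * p n
      = ∑ n ∈ range K, σ n * p n := by
    exact Finset.sum_range_add_sum_Ico _ hk
  have hIco : ∑ n ∈ Ico k K, σ n * p n ≤ σ k * ∑ n ∈ Ico k K, p n := by
    rw [Finset.mul_sum]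
    refine Finset.sum_le_sum fun n hn => ?_
    exact mul_le_mul_of_nonneg_right (hσa (Finset.mem_Ico.1 hn).1) (hp0 n)
  have hIco2 : ∑ n ∈ Ico k K, p n ≤ ∑ n ∈ range k, (1 - p n) := by
    have : ∑ n ∈ range k, p n + ∑ n ∈ Ico k K, p n = ∑ n ∈ range K, p n := by
      exact Finset.sum_range_add_sum_Ico _ hk
    have hcard : ∑ n ∈ range k, (1 - p n) = (k : ℝ) - ∑ n ∈ range k, p n := by
      rw [Finset.sum_sub_distrib]; simp
    linarith
  have hfin : σ k * ∑ n ∈ range k, (1 - p n) ≤ ∑ n ∈ range k, σ n * (1 - p n) := by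
    rw [Finset.mul_sum]
    refine Finset.sum_le_sum fun n hn => ?_
    exact mul_le_mul_of_nonneg_right (hσa (Nat.le_of_lt (mem_range.1 hn)))
      (by linarith [hp1 n])
  calc ∑ n ∈ range K, σ n * p n ≤ ∑ n ∈ range k, σ n * p n + σ k * ∑ n ∈ Ico k K, p n := by linarith
    _ ≤ ∑ n ∈ range k, σ n * p n + ∑ n ∈ range k, σ n * (1 - p n) := by
        have := mul_le_mul_of_nonneg_left hIco2 (hσ0 k)
        linarith
    _ = ∑ n ∈ range k, σ n := by rw [← Finset.sum_add_distrib]; apply Finset.sum_congr rfl; intros; ring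

lemma row_normSq_sum {n m : ℕ} (A : Matrix (Fin n) (Fin m) ℂ) (h : A * Aᴴ = 1) (r : Fin n) :
    ∑ p : Fin m, Complex.normSq (A r p) = 1 := by
  have h1 : (A * Aᴴ) r r = (1 : Matrix (Fin n) (Fin n) ℂ) r r := by rw [h]
  rw [Matrix.mul_apply] at h1
  simp only [Matrix.conjTranspose_apply, Matrix.one_apply_eq] at h1
  have h2 : ∑ p : Fin m, (Complex.normSq (A r p) : ℂ) = 1 := by
    rw [← h1]
    refine Finset.sum_congr rfl fun p _ => ?_
    rw [Complex.star_def, Complex.mul_conj]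
  have h3 := congrArg Complex.re h2
  simpa [Complex.re_sum] using h3

lemma col_normSq_sum {n m : ℕ} (A : Matrix (Fin n) (Fin m) ℂ) (h : Aᴴ * A = 1) (r : Fin m) :
    ∑ p : Fin n, Complex.normSq (A p r) = 1 := by
  have h' : Aᴴ * (Aᴴ)ᴴ = 1 := by rwa [Matrix.conjTranspose_conjTranspose]
  have := row_normSq_sum Aᴴ h' r
  simpa [Matrix.conjTranspose_apply, Complex.normSq_conj] using this

/-- for the diagonal entries `c n = (Uᴴ C V̄) n n` (with `U`, `V` unitary and
`C` having singular values `σ₁ ≥ ⋯ ≥ σ_K`), nonnegative decreasing weights `w`, and a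
permutation `τ` sorting `|c (τ n)|` decreasingly,
`∑ wₙ Re (c n) ≤ ∑ wₙ |c (τ n)| ≤ ∑ wₙ σₙ`. -/
theorem weighted_diag_le_weighted_singular_values {N M : ℕ} (sv w : ℕ → ℝ)
    (hsva : Antitone sv) (hsv0 : ∀ n, 0 ≤ sv n)
    (hwa : Antitone w) (hw0 : ∀ n, 0 ≤ w n)
    (C : Matrix (Fin N) (Fin M) ℂ)
    (X : Matrix (Fin N) (Fin N) ℂ) (Y : Matrix (Fin M) (Fin M) ℂ)
    (hX : Xᴴ * X = 1) (hX' : X * Xᴴ = 1) (hY : Yᴴ * Y = 1) (hY' : Y * Yᴴ = 1)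
    (D : Matrix (Fin N) (Fin M) ℂ)
    (hD : ∀ i j, D i j = if (i : ℕ) = (j : ℕ) then (sv (i : ℕ) : ℂ) else 0)
    (hC : C = X * D * Yᴴ)
    (U : Matrix (Fin N) (Fin N) ℂ) (V : Matrix (Fin M) (Fin M) ℂ)
    (hU : Uᴴ * U = 1) (hU' : U * Uᴴ = 1) (hV : Vᴴ * V = 1) (hV' : V * Vᴴ = 1)
    (c : Fin (min N M) → ℂ)
    (hc : ∀ n : Fin (min N M),
      c n = (Uᴴ * C * V.map (starRingEnd ℂ))
        (Fin.castLE (min_le_left N M) n) (Fin.castLE (min_le_right N M) n))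
    (τ : Equiv.Perm (Fin (min N M)))
    (hτ : Antitone fun n => ‖c (τ n)‖) :
    (∑ n : Fin (min N M), w (n : ℕ) * (c n).re
        ≤ ∑ n : Fin (min N M), w (n : ℕ) * ‖c (τ n)‖) ∧
    (∑ n : Fin (min N M), w (n : ℕ) * ‖c (τ n)‖
        ≤ ∑ n : Fin (min N M), w (n : ℕ) * sv (n : ℕ)) := by
  have hKN : min N M ≤ N := min_le_left N M
  have hKM : min N M ≤ M := min_le_right N M
  set e : Fin (min N M) → Fin N := Fin.castLE hKN with he
  set f : Fin (min N M) → Fin M := Fin.castLE hKM with hf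
  set V' := V.map (starRingEnd ℂ) with hV'def
  set A := Xᴴ * U with hA
  set B := Yᴴ * V' with hB
  -- unitarity of V'
  have hV'T : V'ᴴ = Vᵀ := by
    ext i j
    simp [hV'def, Matrix.conjTranspose_apply, Matrix.map_apply, Matrix.transpose_apply]
  have hV'eq : V' = (Vᴴ)ᵀ := by
    ext i j
    simp [hV'def, Matrix.conjTranspose_apply, Matrix.map_apply, Matrix.transpose_apply]
  have hV'1 : V'ᴴ * V' = 1 := by
    rw [hV'T, hV'eq, ← Matrix.transpose_mul, hV, Matrix.transpose_one]
  have hV'2 : V' * V'ᴴ = 1 := by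
    rw [hV'T, hV'eq, ← Matrix.transpose_mul, hV', Matrix.transpose_one]
  -- unitarity of A, B
  have hA1 : Aᴴ * A = 1 := by
    rw [hA, conjTranspose_mul, conjTranspose_conjTranspose, Matrix.mul_assoc,
      ← Matrix.mul_assoc X Xᴴ U, hX', Matrix.one_mul, hU]
  have hA2 : A * Aᴴ = 1 := by
    rw [hA, conjTranspose_mul, conjTranspose_conjTranspose, Matrix.mul_assoc,
      ← Matrix.mul_assoc U Uᴴ X, hU', Matrix.one_mul, hX]
  have hB1 : Bᴴ * B = 1 := by
    rw [hB, conjTranspose_mul, conjTranspose_conjTranspose, Matrix.mul_assoc,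
      ← Matrix.mul_assoc Y Yᴴ V', hY', Matrix.one_mul, hV'1]
  have hB2 : B * Bᴴ = 1 := by
    rw [hB, conjTranspose_mul, conjTranspose_conjTranspose, Matrix.mul_assoc,
      ← Matrix.mul_assoc V' V'ᴴ Y, hV'2, Matrix.one_mul, hY]
  -- matrix identity
  have hM : Uᴴ * C * V' = Aᴴ * D * B := by
    rw [hC, hA, hB, conjTranspose_mul, conjTranspose_conjTranspose]
    simp only [Matrix.mul_assoc]
  -- entry formula
  have hAD : ∀ (p : Fin N) (j : Fin M), (Aᴴ * D) p j
      = if h : (j : ℕ) < N then (starRingEnd ℂ) (A ⟨(j : ℕ), h⟩ p) * (sv (j : ℕ) : ℂ) else 0 := by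
    intro p j
    rw [Matrix.mul_apply]
    by_cases h : (j : ℕ) < N
    · rw [dif_pos h]
      rw [Finset.sum_eq_single (⟨(j : ℕ), h⟩ : Fin N)]
      · rw [conjTranspose_apply, hD]
        simp [Complex.star_def]
      · intro i _ hi
        rw [hD]
        have hne : ¬((i : ℕ) = (j : ℕ)) := fun hh => hi (Fin.ext hh)
        simp [hne]
      · intro h'; exact absurd (Finset.mem_univ _) h'
    · rw [dif_neg h]
      refine Finset.sum_eq_zero fun i _ => ?_
      rw [hD]
      have hne : ¬((i : ℕ) = (j : ℕ)) := fun hh => h (hh ▸ i.isLt)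
      simp [hne]
  have hcc : ∀ n : Fin (min N M), c n
      = ∑ i : Fin (min N M), (sv (i : ℕ) : ℂ) * ((starRingEnd ℂ) (A (e i) (e n)) * B (f i) (f n)) := by
    intro n
    have h0 : c n = (Aᴴ * D * B) (e n) (f n) := by rw [hc n, hM]
    rw [h0, Matrix.mul_apply]
    have hsupp : ∀ j : Fin M,
        j ∉ (Finset.univ.map ⟨f, (Fin.castLE_injective hKM : Function.Injective f)⟩ :
          Finset (Fin M)) → (Aᴴ * D) (e n) j * B j (f n) = 0 := by
      intro j hj
      have hjN : ¬ ((j : ℕ) < N) := by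
        intro hlt
        apply hj
        simp only [Finset.mem_map, Finset.mem_univ, true_and]
        exact ⟨⟨(j : ℕ), lt_min hlt j.isLt⟩, Fin.ext rfl⟩
      rw [hAD, dif_neg hjN, zero_mul]
    rw [← Finset.sum_subset (Finset.subset_univ _) (fun j _ hj => hsupp j hj)]
    rw [Finset.sum_map]
    refine Finset.sum_congr rfl fun i _ => ?_
    have hfi : ((f i : Fin M) : ℕ) < N := lt_of_lt_of_le i.isLt hKN
    rw [Function.Embedding.coeFn_mk, hAD, dif_pos hfi]
    have hei : (⟨((f i : Fin M) : ℕ), hfi⟩ : Fin N) = e i := Fin.ext rfl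
    have hv : ((f i : Fin M) : ℕ) = (i : ℕ) := rfl
    rw [hei, hv]
    ring
  -- q and bounds
  set q : Fin (min N M) → Fin (min N M) → ℝ :=
    fun i n => ‖A (e i) (e n)‖ * ‖B (f i) (f n)‖ with hqdef
  have hq0 : ∀ i n, 0 ≤ q i n := fun i n =>
    mul_nonneg (norm_nonneg _) (norm_nonneg _)
  have habs : ∀ n : Fin (min N M), ‖c n‖
      ≤ ∑ i : Fin (min N M), sv (i : ℕ) * q i n := by
    intro n
    rw [hcc n]
    refine le_trans (norm_sum_le _ _) (le_of_eq ?_)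
    refine Finset.sum_congr rfl fun i _ => ?_
    simp only [hqdef]
    rw [norm_mul, norm_mul, Complex.norm_conj, Complex.norm_real, Real.norm_eq_abs,
      abs_of_nonneg (hsv0 _)]
  have hqAM : ∀ i n, q i n ≤
      (Complex.normSq (A (e i) (e n)) + Complex.normSq (B (f i) (f n))) / 2 := by
    intro i n
    have h1 := Complex.sq_norm (A (e i) (e n))
    have h2 := Complex.sq_norm (B (f i) (f n))
    simp only [hqdef]
    nlinarith [sq_nonneg (‖A (e i) (e n)‖ - ‖B (f i) (f n)‖)]
  have hsumA : ∀ (r : Fin N) (s : Finset (Fin (min N M))),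
      ∑ n ∈ s, Complex.normSq (A r (e n)) ≤ 1 := by
    intro r s
    rw [← row_normSq_sum A hA2 r]
    rw [← Finset.sum_image (f := fun p => Complex.normSq (A r p))
      (g := e) (fun x _ y _ h => Fin.castLE_injective hKN h)]
    exact Finset.sum_le_univ_sum_of_nonneg fun p => Complex.normSq_nonneg _
  have hsumB : ∀ (r : Fin M) (s : Finset (Fin (min N M))),
      ∑ n ∈ s, Complex.normSq (B r (f n)) ≤ 1 := by
    intro r s
    rw [← row_normSq_sum B hB2 r]
    rw [← Finset.sum_image (f := fun p => Complex.normSq (B r p))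
      (g := f) (fun x _ y _ h => Fin.castLE_injective hKM h)]
    exact Finset.sum_le_univ_sum_of_nonneg fun p => Complex.normSq_nonneg _
  have hsumA' : ∀ (r : Fin N) (s : Finset (Fin (min N M))),
      ∑ n ∈ s, Complex.normSq (A (e n) r) ≤ 1 := by
    intro r s
    rw [← col_normSq_sum A hA1 r]
    rw [← Finset.sum_image (f := fun p => Complex.normSq (A p r))
      (g := e) (fun x _ y _ h => Fin.castLE_injective hKN h)]
    exact Finset.sum_le_univ_sum_of_nonneg fun p => Complex.normSq_nonneg _
  have hsumB' : ∀ (r : Fin M) (s : Finset (Fin (min N M))),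
      ∑ n ∈ s, Complex.normSq (B (f n) r) ≤ 1 := by
    intro r s
    rw [← col_normSq_sum B hB1 r]
    rw [← Finset.sum_image (f := fun p => Complex.normSq (B p r))
      (g := f) (fun x _ y _ h => Fin.castLE_injective hKM h)]
    exact Finset.sum_le_univ_sum_of_nonneg fun p => Complex.normSq_nonneg _
  have hrow : ∀ (i : Fin (min N M)) (s : Finset (Fin (min N M))), ∑ n ∈ s, q i n ≤ 1 := by
    intro i s
    have h1 := hsumA (e i) s
    have h2 := hsumB (f i) s
    calc ∑ n ∈ s, q i n
        ≤ ∑ n ∈ s, (Complex.normSq (A (e i) (e n)) + Complex.normSq (B (f i) (f n))) / 2 :=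
          Finset.sum_le_sum fun n _ => hqAM i n
      _ = (∑ n ∈ s, Complex.normSq (A (e i) (e n))
            + ∑ n ∈ s, Complex.normSq (B (f i) (f n))) / 2 := by
          rw [← Finset.sum_div, Finset.sum_add_distrib]
      _ ≤ 1 := by linarith
  have hcol : ∀ (n : Fin (min N M)) (s : Finset (Fin (min N M))), ∑ i ∈ s, q i n ≤ 1 := by
    intro n s
    have h1 := hsumA' (e n) s
    have h2 := hsumB' (f n) s
    calc ∑ i ∈ s, q i n
        ≤ ∑ i ∈ s, (Complex.normSq (A (e i) (e n)) + Complex.normSq (B (f i) (f n))) / 2 :=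
          Finset.sum_le_sum fun i _ => hqAM i n
      _ = (∑ i ∈ s, Complex.normSq (A (e i) (e n))
            + ∑ i ∈ s, Complex.normSq (B (f i) (f n))) / 2 := by
          rw [← Finset.sum_div, Finset.sum_add_distrib]
      _ ≤ 1 := by linarith
  -- Ky Fan partial sums
  set a : ℕ → ℝ :=
    fun m => if h : m < min N M then ‖c (τ ⟨m, h⟩)‖ else 0 with hadef
  have hKyFan : ∀ k ≤ min N M, ∑ m ∈ range k, a m ≤ ∑ m ∈ range k, sv m := by
    intro k hk
    set ι : Fin k → Fin (min N M) := fun j => τ ⟨(j : ℕ), lt_of_lt_of_le j.isLt hk⟩ with hι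
    have hιinj : Function.Injective ι := by
      intro x y hxy
      have h1 := τ.injective hxy
      have h2 : (x : ℕ) = (y : ℕ) := by simpa [Fin.ext_iff] using h1
      exact Fin.ext h2
    set p : ℕ → ℝ := fun m =>
      if h : m < min N M then ∑ j : Fin k, q ⟨m, h⟩ (ι j) else 0 with hp
    have hp0 : ∀ m, 0 ≤ p m := by
      intro m
      simp only [hp]
      split
      · exact Finset.sum_nonneg fun j _ => hq0 _ _
      · exact le_refl 0
    have hp1 : ∀ m, p m ≤ 1 := by
      intro m
      simp only [hp]
      split
      · next h =>
        rw [← Finset.sum_image (f := fun n => q ⟨m, h⟩ n) (g := ι)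
          (fun x _ y _ hxy => hιinj hxy)]
        exact hrow _ _
      · exact zero_le_one
    have hps : ∑ m ∈ range (min N M), p m ≤ (k : ℝ) := by
      rw [← Fin.sum_univ_eq_sum_range]
      have e1 : ∀ i : Fin (min N M), p (i : ℕ) = ∑ j : Fin k, q i (ι j) := by
        intro i
        simp only [hp]
        rw [dif_pos i.isLt]
      calc ∑ i : Fin (min N M), p (i : ℕ)
          = ∑ i : Fin (min N M), ∑ j : Fin k, q i (ι j) :=
            Finset.sum_congr rfl fun i _ => e1 i
        _ = ∑ j : Fin k, ∑ i : Fin (min N M), q i (ι j) := Finset.sum_comm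
        _ ≤ ∑ _j : Fin k, (1 : ℝ) := Finset.sum_le_sum fun j _ => hcol _ _
        _ = (k : ℝ) := by simp
    have hmain := sv_bound_aux (min N M) k sv hsva hsv0 p hp0 hp1 hk hps
    have hL : ∑ m ∈ range k, a m = ∑ j : Fin k, ‖c (ι j)‖ := by
      rw [← Fin.sum_univ_eq_sum_range]
      refine Finset.sum_congr rfl fun j _ => ?_
      simp only [hadef]
      rw [dif_pos (lt_of_lt_of_le j.isLt hk)]
    calc ∑ m ∈ range k, a m = ∑ j : Fin k, ‖c (ι j)‖ := hL
      _ ≤ ∑ j : Fin k, ∑ i : Fin (min N M), sv (i : ℕ) * q i (ι j) :=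
          Finset.sum_le_sum fun j _ => habs (ι j)
      _ = ∑ i : Fin (min N M), ∑ j : Fin k, sv (i : ℕ) * q i (ι j) := Finset.sum_comm
      _ = ∑ i : Fin (min N M), sv (i : ℕ) * ∑ j : Fin k, q i (ι j) := by
          refine Finset.sum_congr rfl fun i _ => ?_
          rw [Finset.mul_sum]
      _ = ∑ m ∈ range (min N M), sv m * p m := by
          rw [← Fin.sum_univ_eq_sum_range]
          refine Finset.sum_congr rfl fun i _ => ?_
          simp only [hp]
          rw [dif_pos i.isLt]
      _ ≤ ∑ m ∈ range k, sv m := hmain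
  -- second inequality
  have part2 : ∑ n : Fin (min N M), w (n : ℕ) * ‖c (τ n)‖
      ≤ ∑ n : Fin (min N M), w (n : ℕ) * sv (n : ℕ) := by
    have key := abel_aux (min N M) w (fun m => sv m - a m) hwa hw0 (fun k hk => by
      have h1 := hKyFan k hk
      rw [Finset.sum_sub_distrib]
      linarith)
    have e1 : ∑ m ∈ range (min N M), w m * (sv m - a m)
        = ∑ m ∈ range (min N M), w m * sv m - ∑ m ∈ range (min N M), w m * a m := by
      rw [← Finset.sum_sub_distrib]
      exact Finset.sum_congr rfl fun m _ => by ring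
    have e2 : ∑ n : Fin (min N M), w (n : ℕ) * ‖c (τ n)‖
        = ∑ m ∈ range (min N M), w m * a m := by
      rw [← Fin.sum_univ_eq_sum_range]
      refine Finset.sum_congr rfl fun n _ => ?_
      simp only [hadef]
      rw [dif_pos n.isLt]
    have e3 : ∑ n : Fin (min N M), w (n : ℕ) * sv (n : ℕ)
        = ∑ m ∈ range (min N M), w m * sv m := by
      rw [← Fin.sum_univ_eq_sum_range]
    rw [e2, e3]
    linarith [key, e1]
  -- first inequality
  have part1 : ∑ n : Fin (min N M), w (n : ℕ) * (c n).re
      ≤ ∑ n : Fin (min N M), w (n : ℕ) * ‖c (τ n)‖ := by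
    have step1 : ∑ n : Fin (min N M), w (n : ℕ) * (c n).re
        ≤ ∑ n : Fin (min N M), w (n : ℕ) * ‖c n‖ :=
      Finset.sum_le_sum fun n _ =>
        mul_le_mul_of_nonneg_left (Complex.re_le_norm _) (hw0 _)
    have mono : Monovary (fun n : Fin (min N M) => w (n : ℕ))
        (fun n => ‖c (τ n)‖) := by
      intro i j hij
      have hji : j ≤ i := by
        by_contra hcon
        push_neg at hcon
        exact absurd (hτ hcon.le) (not_le.2 hij)
      exact hwa (Fin.le_iff_val_le_val.1 hji)
    have step2 := mono.sum_smul_comp_perm_le_sum_smul (σ := τ⁻¹)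
    simp only [smul_eq_mul, Equiv.Perm.coe_inv, Equiv.apply_symm_apply] at step2
    exact le_trans step1 step2
  exact ⟨part1, part2⟩
end

section
/- Fix 0 < p < 1, a cutoff c with 1 ≤ c ≤ 2^N, and a splitting N = N_A + N_B. Write c = 2^{N_A} b + a with 0 ≤ a < 2^{N_A}. Then the vector ψ = ∑_{n=0}^{c−1} p^n |n⟩ ∈ (C^{2^{N_A}}) ⊗ (C^{2^{N_B}}) (identifying |n⟩ = |l⟩⊗|m⟩ for n = l + 2^{N_A} m) has Schmidt rank at most 2 across this bipartition; moreover if a = 0 or b = 0, the Schmidt rank is at most 1. -/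
open Finset Matrix

lemma my_rank_add_le {m n : Type*} [Fintype m] [Fintype n] (A B : Matrix m n ℂ) :
    (A + B).rank ≤ A.rank + B.rank := by
  rw [Matrix.rank, Matrix.rank, Matrix.rank, Matrix.mulVecLin_add]
  refine le_trans (Submodule.finrank_mono ?_)
    (Submodule.finrank_add_le_finrank_add_finrank _ _)
  rintro x ⟨v, rfl⟩
  exact Submodule.add_mem_sup ⟨v, rfl⟩ ⟨v, rfl⟩

lemma my_rank_vecMulVec_le {m n : Type*} [Fintype m] [Fintype n] (u : m → ℂ) (v : n → ℂ) :
    (Matrix.vecMulVec u v).rank ≤ 1 := by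
  rw [Matrix.vecMulVec_eq Unit]
  exact (Matrix.rank_mul_le_left _ _).trans
    (by simpa using Matrix.rank_le_card_width (Matrix.replicateCol Unit u))

/-- for `0 < p < 1`, a cutoff `1 ≤ c ≤ 2^(NA+NB)`, and the bipartition
`n = l + 2^NA * m`, the coefficient matrix of `ψ = ∑_{n < c} pⁿ |n⟩` has rank (Schmidt
rank) at most `2`; moreover if `a = c % 2^NA = 0` or `b = c / 2^NA = 0`, the rank is at
most `1`. -/
theorem truncated_exponential_schmidt_rank (NA NB : ℕ) (p : ℝ)
    (hp0 : 0 < p) (hp1 : p < 1) (c : ℕ) (hc1 : 1 ≤ c) (hc2 : c ≤ 2 ^ (NA + NB)) :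
    (Matrix.of fun (l : Fin (2 ^ NA)) (m : Fin (2 ^ NB)) =>
        (if (l : ℕ) + 2 ^ NA * (m : ℕ) < c
          then ((p ^ ((l : ℕ) + 2 ^ NA * (m : ℕ)) : ℝ) : ℂ) else 0)).rank ≤ 2 ∧
    (c % 2 ^ NA = 0 ∨ c / 2 ^ NA = 0 →
      (Matrix.of fun (l : Fin (2 ^ NA)) (m : Fin (2 ^ NB)) =>
        (if (l : ℕ) + 2 ^ NA * (m : ℕ) < c
          then ((p ^ ((l : ℕ) + 2 ^ NA * (m : ℕ)) : ℝ) : ℂ) else 0)).rank ≤ 1) := by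
  set a := c % 2 ^ NA with ha
  set b := c / 2 ^ NA with hb
  have hpow : 0 < 2 ^ NA := Nat.pow_pos (by norm_num)
  have halt : a < 2 ^ NA := Nat.mod_lt _ hpow
  have hcab : 2 ^ NA * b + a = c := Nat.div_add_mod c (2 ^ NA)
  set M1 : Matrix (Fin (2 ^ NA)) (Fin (2 ^ NB)) ℂ :=
    Matrix.vecMulVec (fun l => (p : ℂ) ^ (l : ℕ))
      (fun m => if (m : ℕ) < b then (p : ℂ) ^ (2 ^ NA * (m : ℕ)) else 0) with hM1
  set M2 : Matrix (Fin (2 ^ NA)) (Fin (2 ^ NB)) ℂ :=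
    Matrix.vecMulVec (fun l => if (l : ℕ) < a then (p : ℂ) ^ (l : ℕ) else 0)
      (fun m => if (m : ℕ) = b then (p : ℂ) ^ (2 ^ NA * b) else 0) with hM2
  have hM : (Matrix.of fun (l : Fin (2 ^ NA)) (m : Fin (2 ^ NB)) =>
        (if (l : ℕ) + 2 ^ NA * (m : ℕ) < c
          then ((p ^ ((l : ℕ) + 2 ^ NA * (m : ℕ)) : ℝ) : ℂ) else 0)) = M1 + M2 := by
    ext l m
    have hl := l.isLt
    simp only [Matrix.of_apply, Matrix.add_apply, hM1, hM2, Matrix.vecMulVec_apply]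
    rcases lt_trichotomy (m : ℕ) b with h | h | h
    · have h1 : (l : ℕ) + 2 ^ NA * (m : ℕ) < c := by
        calc (l : ℕ) + 2 ^ NA * (m : ℕ) < 2 ^ NA + 2 ^ NA * (m : ℕ) := by omega
          _ = 2 ^ NA * ((m : ℕ) + 1) := by ring
          _ ≤ 2 ^ NA * b := Nat.mul_le_mul_left _ h
          _ ≤ 2 ^ NA * b + a := Nat.le_add_right _ _
          _ = c := hcab
      rw [if_pos h1, if_pos h, if_neg (by omega : ¬ (m : ℕ) = b)]
      push_cast
      rw [pow_add, mul_zero, add_zero]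
    · rw [h, if_neg (lt_irrefl b), if_pos rfl, mul_zero, zero_add]
      by_cases h2 : (l : ℕ) < a
      · rw [if_pos (by rw [← hcab]; omega : (l : ℕ) + 2 ^ NA * b < c), if_pos h2]
        push_cast
        rw [pow_add]
      · rw [if_neg (by rw [← hcab]; omega : ¬ (l : ℕ) + 2 ^ NA * b < c), if_neg h2,
          zero_mul]
    · have h1 : ¬ (l : ℕ) + 2 ^ NA * (m : ℕ) < c := by
        have : 2 ^ NA * (b + 1) ≤ 2 ^ NA * (m : ℕ) := Nat.mul_le_mul_left _ h
        rw [Nat.mul_add, Nat.mul_one] at this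
        omega
      rw [if_neg h1, if_neg (by omega : ¬ (m : ℕ) < b),
        if_neg (by omega : ¬ (m : ℕ) = b)]
      simp
  constructor
  · rw [hM]
    calc (M1 + M2).rank ≤ M1.rank + M2.rank := my_rank_add_le _ _
      _ ≤ 1 + 1 := add_le_add (my_rank_vecMulVec_le _ _) (my_rank_vecMulVec_le _ _)
      _ = 2 := rfl
  · rintro (h | h)
    · have : M2 = 0 := by
        ext l m
        simp [hM2, Matrix.vecMulVec_apply, h, ha ▸ h]
      rw [hM, this, add_zero]
      exact my_rank_vecMulVec_le _ _
    · have : M1 = 0 := by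
        ext l m
        simp [hM1, Matrix.vecMulVec_apply, h, Nat.not_lt_zero]
      rw [hM, this, zero_add]
      exact my_rank_vecMulVec_le _ _
end

section
/- More generally, if the coefficients w_n of a vector ψ = ∑_{n=0}^{2^N−1} w_n |n⟩ are a linear combination of r exponentials, w_n = ∑_{j=1}^r γ_j z_j^n with z_j ∈ C, then for every bipartition of the N qubits into lower N_A bits and upper N_B bits, the Schmidt rank of ψ is at most r. -/
open Finset Matrix

/-- if the coefficients of `ψ = ∑_{n < 2^N} w n |n⟩` are a linear
combination of `r` exponentials, `w n = ∑_{j < r} γ j * (z j) ^ n`, then across any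
bipartition into lower `NA` bits and upper `NB` bits (`n = l + 2^NA * m`) the Schmidt
rank of `ψ`, i.e. the rank of its coefficient matrix, is at most `r`. -/
theorem sum_of_exponentials_schmidt_rank (NA NB r : ℕ) (γ z : ℕ → ℂ)
    (w : ℕ → ℂ) (hw : ∀ n, w n = ∑ j ∈ Finset.range r, γ j * z j ^ n) :
    (Matrix.of fun (l : Fin (2 ^ NA)) (m : Fin (2 ^ NB)) =>
        w ((l : ℕ) + 2 ^ NA * (m : ℕ))).rank ≤ r := by
  set A : Matrix (Fin (2 ^ NA)) (Fin r) ℂ :=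
    Matrix.of fun l j => γ (j : ℕ) * z (j : ℕ) ^ (l : ℕ)
  set B : Matrix (Fin r) (Fin (2 ^ NB)) ℂ :=
    Matrix.of fun j m => (z (j : ℕ) ^ (2 ^ NA)) ^ (m : ℕ)
  have hAB : (Matrix.of fun (l : Fin (2 ^ NA)) (m : Fin (2 ^ NB)) =>
      w ((l : ℕ) + 2 ^ NA * (m : ℕ))) = A * B := by
    ext l m
    simp only [Matrix.mul_apply, Matrix.of_apply, A, B, hw]
    rw [Finset.sum_range fun j => γ j * z j ^ ((l : ℕ) + 2 ^ NA * (m : ℕ))]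
    congr 1
    ext j
    rw [pow_add, ← pow_mul]
    ring
  rw [hAB]
  calc (A * B).rank ≤ A.rank := Matrix.rank_mul_le_left A B
    _ ≤ Fintype.card (Fin r) := Matrix.rank_le_card_width A
    _ = r := Fintype.card_fin r
end
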